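/- The Dahmen–Micchelli space DM(X) is contained in F(X), and if X generates a pointed cone then the partition function P_X belongs to F(X). -/

import Mathlib

open Function

attribute [local instance] Classical.propDecidable

noncomputable section

/-- The lattice `Γ = ι → ℤ`. -/
abbrev ZLat (ι : Type*) := ι → ℤ
/-- The ambient real vector space `V = Γ ⊗ ℝ = ι → ℝ`. -/
abbrev Amb (ι : Type*) := ι → ℝ

variable {ι : Type*} [Fintype ι]

/-- Embedding of the lattice into the ambient space. -/
def castV (γ : ZLat ι) : Amb ι := fun i => (γ i : ℝ)

/-- Standard pairing on `V`. -/
def dotR (u v : Amb ι) : ℝ := ∑ i, u i * v i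

/-- The difference operator `∇ₐ`. -/
def nab (a : ZLat ι) (f : ZLat ι → ℤ) : ZLat ι → ℤ := fun b => f b - f (b - a)

/-- `∇_Y = ∏_{a ∈ Y} ∇ₐ` for a list `Y`. -/
def nabL (Y : List (ZLat ι)) (f : ZLat ι → ℤ) : ZLat ι → ℤ := Y.foldr nab f

/-- Delta function at `0`. -/
def delta0 : ZLat ι → ℤ := fun γ => if γ = 0 then 1 else 0

/-- The partition function of a list `Y`: the number of ways of writing `γ` as a
nonnegative integral combination of the entries of `Y`. -/
def partFn (Y : List (ZLat ι)) : ZLat ι → ℤ :=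
  fun γ => Nat.card {k : Fin Y.length → ℕ // ∑ i, (k i : ℤ) • Y.get i = γ}

/-- The cone `C(Y)` of nonnegative real combinations of the entries of `Y`. -/
def coneC (Y : List (ZLat ι)) : Set (Amb ι) :=
  {v | ∃ t : Fin Y.length → ℝ, (∀ i, 0 ≤ t i) ∧ v = ∑ i, t i • castV (Y.get i)}

/-- `C(Y)` is pointed: it contains no line. -/
def PointedList (Y : List (ZLat ι)) : Prop :=
  ∀ v ∈ coneC Y, -v ∈ coneC Y → v = 0

/-- The zonotope `B(Y) = {∑ tᵢ aᵢ : 0 ≤ tᵢ ≤ 1}`. -/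
def zono (Y : List (ZLat ι)) : Set (Amb ι) :=
  {v | ∃ t : Fin Y.length → ℝ, (∀ i, 0 ≤ t i ∧ t i ≤ 1) ∧ v = ∑ i, t i • castV (Y.get i)}

/-- The real span of a list of lattice vectors. -/
def spanOf (Y : List (ZLat ι)) : Submodule ℝ (Amb ι) :=
  Submodule.span ℝ (castV '' {a | a ∈ Y})

/-- A subspace is rational (relative to `X`) if it is spanned by a sublist of `X`. -/
def IsRational (X : List (ZLat ι)) (r : Submodule ℝ (Amb ι)) : Prop :=
  ∃ Y : List (ZLat ι), (∀ a ∈ Y, a ∈ X) ∧ r = spanOf Y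

/-- The sublist `X ∩ r`. -/
def inSub (X : List (ZLat ι)) (r : Submodule ℝ (Amb ι)) : List (ZLat ι) :=
  X.filter (fun a => decide (castV a ∈ r))

/-- The sublist `X \ r`. -/
def outSub (X : List (ZLat ι)) (r : Submodule ℝ (Amb ι)) : List (ZLat ι) :=
  X.filter (fun a => decide (castV a ∉ r))

/-- The operator `∇_{X \ r}`. -/
def nabOut (X : List (ZLat ι)) (r : Submodule ℝ (Amb ι)) (f : ZLat ι → ℤ) : ZLat ι → ℤ :=
  nabL (outSub X r) f

/-- The space `𝓕(X)`: `∇_{X\r} f` is supported on `Γ ∩ r` for every rational `r`. -/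
def memF (X : List (ZLat ι)) (f : ZLat ι → ℤ) : Prop :=
  ∀ r, IsRational X r → support (nabOut X r f) ⊆ {γ | castV γ ∈ r}

/-- The Dahmen–Micchelli space of a list `Y` (inside its span): `f` is killed by
`∇_{Y \ H}` for every rational hyperplane `H` of the span of `Y`. -/
def memDM (Y : List (ZLat ι)) (f : ZLat ι → ℤ) : Prop :=
  ∀ H, IsRational Y H → Module.finrank ℝ H + 1 = Module.finrank ℝ (spanOf Y) →
    nabOut Y H f = 0

/-- `𝓕(X ∩ r)`, viewed as functions on `Γ` supported on `Γ ∩ r`. -/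
def memFrel (X : List (ZLat ι)) (r : Submodule ℝ (Amb ι)) (g : ZLat ι → ℤ) : Prop :=
  support g ⊆ {γ | castV γ ∈ r} ∧ memF (inSub X r) g

/-- `DM(X ∩ r)`, viewed as functions on `Γ` supported on `Γ ∩ r`. -/
def memDMrel (X : List (ZLat ι)) (r : Submodule ℝ (Amb ι)) (g : ZLat ι → ℤ) : Prop :=
  support g ⊆ {γ | castV γ ∈ r} ∧ memDM (inSub X r) g

/-- `u` is a regular vector for `X \ r`:  `u ∈ r^⊥` and `⟨u, a⟩ ≠ 0` for all `a ∈ X \ r`.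
It determines the regular face `F` containing it. -/
def Reg (X : List (ZLat ι)) (r : Submodule ℝ (Amb ι)) (u : Amb ι) : Prop :=
  (∀ v ∈ r, dotR u v = 0) ∧ ∀ a ∈ X, castV a ∉ r → dotR u (castV a) ≠ 0

/-- The sublist `B ⊆ X \ r` of elements negative on `u`. -/
def negPart (X : List (ZLat ι)) (r : Submodule ℝ (Amb ι)) (u : Amb ι) : List (ZLat ι) :=
  (outSub X r).filter (fun a => decide (dotR u (castV a) < 0))

/-- The list `[A, -B]`: entries of `X \ r`, with sign flipped on the part negative on `u`. -/
def signedOut (X : List (ZLat ι)) (r : Submodule ℝ (Amb ι)) (u : Amb ι) : List (ZLat ι) :=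
  (outSub X r).map (fun a => if 0 < dotR u (castV a) then a else -a)

/-- The special function `𝓟_{X\r}^F` for the face `F ∋ u`:
`(-1)^{|B|} τ_{-∑_{b∈B} b} (∏_{a∈A} ∑_k δ_{ka}) * (∏_{b∈B} ∑_k δ_{-kb})`. -/
def PF (X : List (ZLat ι)) (r : Submodule ℝ (Amb ι)) (u : Amb ι) : ZLat ι → ℤ :=
  fun γ => (-1) ^ (negPart X r u).length *
    partFn (signedOut X r u) (γ + (negPart X r u).sum)

/-- The support region `-∑_{b∈B} b + C(A, -B)` of `𝓟_{X\r}^F`, as a subset of `Γ`. -/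
def PFsupp (X : List (ZLat ι)) (r : Submodule ℝ (Amb ι)) (u : Amb ι) : Set (ZLat ι) :=
  {γ | castV (γ + (negPart X r u).sum) ∈ coneC (signedOut X r u)}

/-- Convolution of two functions on the lattice. -/
def conv (f g : ZLat ι → ℤ) : ZLat ι → ℤ := fun γ => ∑ᶠ μ, f (γ - μ) * g μ

/-- The union of all rational hyperplanes (inside the span of `Y`). -/
def hyperUnion (Y : List (ZLat ι)) : Set (Amb ι) :=
  {v | ∃ H, IsRational Y H ∧ Module.finrank ℝ H + 1 = Module.finrank ℝ (spanOf Y) ∧ v ∈ H}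

/-- A tope for `Y`: a connected component of the complement (in the span of `Y`) of the
union of the hyperplanes spanned by sublists of `Y`. -/
def IsTope (Y : List (ZLat ι)) (τ : Set (Amb ι)) : Prop :=
  ∃ v ∈ (spanOf Y : Set (Amb ι)) \ hyperUnion Y,
    τ = connectedComponentIn ((spanOf Y : Set (Amb ι)) \ hyperUnion Y) v

/-- The set of singular vectors: the union of the cones `C(Y)` over sublists `Y` of `X`
not spanning `V`. -/
def singSet (X : List (ZLat ι)) : Set (Amb ι) :=
  {v | ∃ Y : List (ZLat ι), (∀ a ∈ Y, a ∈ X) ∧ spanOf Y ≠ ⊤ ∧ v ∈ coneC Y}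

/-- A big cell: a connected component of the complement of the set of singular vectors. -/
def IsBigCell (X : List (ZLat ι)) (c : Set (Amb ι)) : Prop :=
  ∃ v ∈ (singSet X)ᶜ, c = connectedComponentIn (singSet X)ᶜ v

/-- Minkowski difference of sets, `A - B`. -/
def sdiffSet (A B : Set (Amb ι)) : Set (Amb ι) := {x | ∃ a ∈ A, ∃ b ∈ B, x = a - b}

/-!
If `r` is a proper rational subspace, adding vectors of `X` one at a time enlarges it to a
rational hyperplane `H ⊇ r`; then `X \ H ⊆ X \ r`, so `∇_{X\r} = ∇_D ∇_{X\H}` kills `DM(X)`.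

A representation of `γ` by `a :: Y` either does not use `a` or is a representation of `γ - a`
by `a :: Y`, so `∇_a 𝓟_{a :: Y} = 𝓟_Y`; as `𝓟` does not depend on the order of the list,
`∇_{X\r} 𝓟_X = 𝓟_{X∩r}`, which lives on `r`. This counting needs finitely many
representations: two distinct ones of `γ` are incomparable in `ℕⁿ`, as their difference would be
a nontrivial nonnegative relation among the vectors of a pointed cone, and antichains of `ℕⁿ`
are finite by Dickson's lemma.
-/

section
variable {ι : Type*}

lemma nab_comm (a b : ZLat ι) (f : ZLat ι → ℤ) : nab a (nab b f) = nab b (nab a f) := by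
  funext c
  simp only [nab, sub_right_comm c a b]
  ring

instance : LeftCommutative (nab (ι := ι)) := ⟨nab_comm⟩

lemma nabL_zero (L : List (ZLat ι)) : nabL L 0 = 0 := by
  induction L with
  | nil => rfl
  | cons a L ih =>
    simp only [nabL, List.foldr_cons] at *
    rw [ih]
    funext c
    simp [nab]

lemma nabL_append (A B : List (ZLat ι)) (f : ZLat ι → ℤ) :
    nabL (A ++ B) f = nabL A (nabL B f) := List.foldr_append

lemma nabL_perm {A B : List (ZLat ι)} (h : A.Perm B) (f : ZLat ι → ℤ) : nabL A f = nabL B f :=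
  h.foldr_eq f

lemma nab_nabL (a : ZLat ι) (L : List (ZLat ι)) (f : ZLat ι → ℤ) :
    nab a (nabL L f) = nabL L (nab a f) := by
  induction L with
  | nil => rfl
  | cons b L ih => simp only [nabL, List.foldr_cons] at *; rw [nab_comm, ih]

lemma nabOut_eq_zero_of_le (X : List (ZLat ι)) {r H : Submodule ℝ (Amb ι)} (hrH : r ≤ H)
    {f : ZLat ι → ℤ} (hf : nabOut X H f = 0) : nabOut X r f = 0 := by
  have hsub : (outSub X H).Sublist (outSub X r) :=
    X.monotone_filter_right fun a ha => by simpa using fun h => of_decide_eq_true ha (hrH h)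
  obtain ⟨D, hD⟩ := hsub.exists_perm_append
  rw [nabOut, nabL_perm (hD.trans List.perm_append_comm), nabL_append]
  exact (congrArg (nabL D) hf).trans (nabL_zero D)

lemma spanOf_cons (a : ZLat ι) (Y : List (ZLat ι)) :
    spanOf (a :: Y) = Submodule.span ℝ {castV a} ⊔ spanOf Y := by
  rw [spanOf, spanOf, ← Submodule.span_insert]
  congr 1
  ext v
  simp [eq_comm]

lemma IsRational.span_castV_sup {X : List (ZLat ι)} {r : Submodule ℝ (Amb ι)}
    (hr : IsRational X r) {a : ZLat ι} (ha : a ∈ X) :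
    IsRational X (Submodule.span ℝ {castV a} ⊔ r) := by
  obtain ⟨Y, hY, rfl⟩ := hr
  exact ⟨a :: Y, by simpa [ha] using hY, (spanOf_cons a Y).symm⟩

end

lemma finrank_span_singleton_sup_le {K V : Type*} [DivisionRing K] [AddCommGroup V] [Module K V]
    [FiniteDimensional K V] (v : V) (r : Submodule K V) :
    Module.finrank K (Submodule.span K {v} ⊔ r : Submodule K V) ≤ Module.finrank K r + 1 := by
  have h1 : Module.finrank K (Submodule.span K {v}) ≤ 1 :=
    (finrank_span_le_card {v}).trans (by simp)
  have h2 := Submodule.finrank_add_le_finrank_add_finrank (Submodule.span K {v}) r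
  omega

lemma exists_isRational_hyperplane_ge {ι : Type*} [Fintype ι] {X : List (ZLat ι)}
    (hspan : spanOf X = ⊤) {r : Submodule ℝ (Amb ι)} (hr : IsRational X r) (hne : r ≠ ⊤) :
    ∃ H, IsRational X H ∧ r ≤ H ∧ Module.finrank ℝ H + 1 = Module.finrank ℝ (Amb ι) := by
  induction hd : Module.finrank ℝ (Amb ι) - Module.finrank ℝ r using Nat.strong_induction_on
    generalizing r with
  | _ d ih =>
    have hlt := Submodule.finrank_lt hne
    by_cases hcodim : Module.finrank ℝ r + 1 = Module.finrank ℝ (Amb ι)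
    · exact ⟨r, hr, le_rfl, hcodim⟩
    obtain ⟨a, haX, har⟩ : ∃ a ∈ X, castV a ∉ r := by
      by_contra! hall
      refine hne (top_le_iff.mp (hspan ▸ Submodule.span_le.mpr ?_))
      rintro _ ⟨a, ha, rfl⟩
      exact hall a ha
    have hlt' : r < Submodule.span ℝ {castV a} ⊔ r :=
      lt_of_le_of_ne le_sup_right fun h => har (h ▸ Submodule.mem_sup_left
        (Submodule.mem_span_singleton_self _))
    have hgt := Submodule.finrank_lt_finrank_of_lt hlt'
    have hle := finrank_span_singleton_sup_le (castV a) r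
    have hne' : Submodule.span ℝ {castV a} ⊔ r ≠ ⊤ := fun h => by
      rw [h, finrank_top] at hle; omega
    obtain ⟨H, hH, hr'H, hHrank⟩ := ih _ (by omega) (hr.span_castV_sup haX) hne' rfl
    exact ⟨H, hH, hlt'.le.trans hr'H, hHrank⟩

theorem memF_of_memDM {ι : Type*} [Fintype ι] {X : List (ZLat ι)} (hspan : spanOf X = ⊤)
    {f : ZLat ι → ℤ} (hf : memDM X f) : memF X f := by
  intro r hr
  rcases eq_or_ne r ⊤ with rfl | hne
  · exact fun γ _ => (Submodule.mem_top : castV γ ∈ (⊤ : Submodule ℝ (Amb ι)))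
  obtain ⟨H, hH, hrH, hHrank⟩ := exists_isRational_hyperplane_ge hspan hr hne
  rw [nabOut_eq_zero_of_le X hrH (hf H hH (by rwa [hspan, finrank_top])), support_zero]
  exact Set.empty_subset _

section
variable {ι : Type*}

lemma castV_injective : Injective (castV (ι := ι)) :=
  fun a b h => funext fun i => by simpa [castV] using congrFun h i

@[simp] lemma castV_zero : castV (0 : ZLat ι) = 0 := by
  funext i
  simp [castV]

lemma castV_sum {κ : Type*} [Fintype κ] (c : κ → ℤ) (v : κ → ZLat ι) :
    castV (∑ i, c i • v i) = ∑ i, (c i : ℝ) • castV (v i) := by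
  funext j
  simp [castV, Finset.sum_apply]

lemma coneC_mono {Y Y' : List (ZLat ι)} (h : ∀ a ∈ Y, a ∈ Y') : coneC Y ⊆ coneC Y' := by
  rintro _ ⟨t, ht, rfl⟩
  choose idx hidx using fun i => List.mem_iff_get.mp (h _ (Y.get_mem i))
  refine ⟨fun j => ∑ i with idx i = j, t i, fun j => Finset.sum_nonneg fun i _ => ht i, ?_⟩
  rw [← Finset.sum_fiberwise Finset.univ idx]
  refine Finset.sum_congr rfl fun j _ => ?_
  rw [Finset.sum_smul]
  refine Finset.sum_congr rfl fun i hi => ?_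
  rw [← (Finset.mem_filter.mp hi).2, hidx]

lemma PointedList.mono {Y Y' : List (ZLat ι)} (hP : PointedList Y') (h : ∀ a ∈ Y, a ∈ Y') :
    PointedList Y :=
  fun v hv hv' => hP v (coneC_mono h hv) (coneC_mono h hv')

lemma PointedList.eq_zero_of_sum_smul_eq_zero {Y : List (ZLat ι)} (hP : PointedList Y)
    (h0 : ∀ a ∈ Y, a ≠ 0) {d : Fin Y.length → ℕ} (hd : ∑ i, (d i : ℤ) • Y.get i = 0) :
    d = 0 := by
  funext j
  have hsum : ∑ i, (d i : ℝ) • castV (Y.get i) = 0 := by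
    have := congrArg castV hd
    rw [castV_sum, castV_zero] at this
    exact_mod_cast this
  have hv : (d j : ℝ) • castV (Y.get j) ∈ coneC Y :=
    ⟨fun i => if i = j then (d j : ℝ) else 0, fun i => by positivity, by simp [ite_smul]⟩
  have hnegv : -((d j : ℝ) • castV (Y.get j)) ∈ coneC Y := by
    refine ⟨fun i => if i = j then 0 else (d i : ℝ), fun i => by positivity, ?_⟩
    rw [neg_eq_iff_add_eq_zero, ← hsum, add_comm, ← Finset.sum_erase_add _ _ (Finset.mem_univ j)]
    simp [Finset.sum_ite, Finset.filter_ne']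
  have hj : castV (Y.get j) ≠ 0 := castV_zero (ι := ι) ▸ castV_injective.ne (h0 _ (Y.get_mem j))
  exact_mod_cast (smul_eq_zero.mp (hP _ hv hnegv)).resolve_right hj

abbrev RepSet (Y : List (ZLat ι)) (γ : ZLat ι) : Type :=
  {k : Fin Y.length → ℕ // ∑ i, (k i : ℤ) • Y.get i = γ}

lemma PointedList.finite_repSet {Y : List (ZLat ι)} (hP : PointedList Y) (h0 : ∀ a ∈ Y, a ≠ 0)
    (γ : ZLat ι) : Finite (RepSet Y γ) := by
  have hanti : IsAntichain (· ≤ ·) {k : Fin Y.length → ℕ | ∑ i, (k i : ℤ) • Y.get i = γ} := by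
    intro k hk k' hk' hne hle
    refine hne (le_antisymm hle (tsub_eq_zero_iff_le.mp (hP.eq_zero_of_sum_smul_eq_zero h0 ?_)))
    simp only [Set.mem_ofPred_eq] at hk hk'
    simp only [Pi.sub_apply, Nat.cast_sub (hle _), sub_smul, Finset.sum_sub_distrib, hk, hk',
      sub_self]
  exact (WellQuasiOrderedLE.finite_of_isAntichain hanti).to_subtype

lemma sum_smul_get_cons (a : ZLat ι) (Y : List (ZLat ι)) (k : Fin (a :: Y).length → ℕ) :
    ∑ i, (k i : ℤ) • (a :: Y).get i = (k 0 : ℤ) • a + ∑ i, (k i.succ : ℤ) • Y.get i :=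
  Fin.sum_univ_succ _

def repSetConsEquiv (a : ZLat ι) (Y : List (ZLat ι)) (γ : ZLat ι) :
    RepSet (a :: Y) γ ≃ Σ m : ℕ, RepSet Y (γ - (m : ℤ) • a) where
  toFun k := ⟨k.1 0, Fin.tail k.1,
    eq_sub_iff_add_eq'.mpr ((sum_smul_get_cons a Y k.1).symm.trans k.2)⟩
  invFun p := ⟨Fin.cons p.1 p.2.1, by
    rw [sum_smul_get_cons]
    simp only [Fin.cons_zero, Fin.cons_succ, p.2.2, add_sub_cancel]⟩
  left_inv k := Subtype.ext (Fin.cons_self_tail k.1)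
  right_inv := fun ⟨_, _, _⟩ => rfl

lemma repSet_perm {Y Y' : List (ZLat ι)} (h : Y.Perm Y') (γ : ZLat ι) :
    Nonempty (RepSet Y γ ≃ RepSet Y' γ) := by
  induction h generalizing γ with
  | nil => exact ⟨Equiv.refl _⟩
  | cons a _ ih =>
    exact ⟨(repSetConsEquiv a _ γ).trans
      ((Equiv.sigmaCongrRight fun m => (ih _).some).trans (repSetConsEquiv a _ γ).symm)⟩
  | swap a b L =>
    let sigmaComm : (Σ m : ℕ, Σ n : ℕ, RepSet L (γ - (m : ℤ) • b - (n : ℤ) • a)) ≃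
        Σ n : ℕ, Σ m : ℕ, RepSet L (γ - (n : ℤ) • a - (m : ℤ) • b) :=
      { toFun := fun p => ⟨p.2.1, p.1, p.2.2.1, p.2.2.2.trans (sub_right_comm _ _ _)⟩
        invFun := fun p => ⟨p.2.1, p.1, p.2.2.1, p.2.2.2.trans (sub_right_comm _ _ _)⟩
        left_inv := fun _ => rfl
        right_inv := fun _ => rfl }
    exact ⟨(repSetConsEquiv b _ γ).trans <|
      (Equiv.sigmaCongrRight fun m => repSetConsEquiv a _ _).trans <| sigmaComm.trans <|
      (Equiv.sigmaCongrRight fun n => (repSetConsEquiv b _ _).symm).trans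
      (repSetConsEquiv a _ γ).symm⟩
  | trans _ _ ih₁ ih₂ => exact ⟨(ih₁ γ).some.trans (ih₂ γ).some⟩

lemma partFn_perm {Y Y' : List (ZLat ι)} (h : Y.Perm Y') : partFn Y = partFn Y' :=
  funext fun γ => congrArg _ (Nat.card_congr (repSet_perm h γ).some)

def repSetConsEquivSum (a : ZLat ι) (Y : List (ZLat ι)) (γ : ZLat ι) :
    RepSet (a :: Y) γ ≃ RepSet Y γ ⊕ RepSet (a :: Y) (γ - a) :=
  (repSetConsEquiv a Y γ).trans <|
    (Equiv.sigmaNatSucc _).trans <|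
    Equiv.sumCongr (Equiv.subtypeEquivRight fun k => by simp) <|
    (Equiv.sigmaCongrRight fun m => Equiv.subtypeEquivRight fun k => by
      rw [Nat.cast_succ, add_smul, one_smul, sub_add_eq_sub_sub_swap]).trans
    (repSetConsEquiv a Y (γ - a)).symm

lemma nab_partFn_cons {a : ZLat ι} {Y : List (ZLat ι)}
    (hfin : ∀ γ, Finite (RepSet (a :: Y) γ)) (hfinY : ∀ γ, Finite (RepSet Y γ)) :
    nab a (partFn (a :: Y)) = partFn Y := by
  funext γ
  have := hfin (γ - a)
  have := hfinY γ
  simp only [nab, partFn, Nat.card_congr (repSetConsEquivSum a Y γ), Nat.card_sum]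
  push_cast
  ring

lemma nabL_partFn_append {A B : List (ZLat ι)} (hP : PointedList (A ++ B))
    (h0 : ∀ a ∈ A ++ B, a ≠ 0) : nabL A (partFn (A ++ B)) = partFn B := by
  induction A with
  | nil => rfl
  | cons a A ih =>
    rw [List.cons_append] at hP h0
    have hsub : ∀ c ∈ A ++ B, c ∈ a :: A ++ B := fun c hc => List.mem_cons_of_mem a hc
    have hP' := hP.mono hsub
    have h0' := fun c hc => h0 c (hsub c hc)
    calc nabL (a :: A) (partFn (a :: (A ++ B)))
        = nabL A (nab a (partFn (a :: (A ++ B)))) := nab_nabL a A _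
      _ = partFn B := by
        rw [nab_partFn_cons (hP.finite_repSet h0) (hP'.finite_repSet h0'), ih hP' h0']

lemma perm_outSub_append_inSub (X : List (ZLat ι)) (r : Submodule ℝ (Amb ι)) :
    X.Perm (outSub X r ++ inSub X r) := by
  simpa [outSub, inSub] using (List.filter_append_perm (fun a => decide (castV a ∉ r)) X).symm

lemma castV_mem_spanOf_of_partFn_ne_zero {Y : List (ZLat ι)} {γ : ZLat ι}
    (h : partFn Y γ ≠ 0) : castV γ ∈ spanOf Y := by
  obtain ⟨⟨k, rfl⟩⟩ : Nonempty (RepSet Y γ) :=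
    (Nat.card_ne_zero.mp (Int.natCast_ne_zero.mp h)).1
  rw [castV_sum]
  exact Submodule.sum_mem _ fun i _ =>
    Submodule.smul_mem _ _ (Submodule.subset_span ⟨_, Y.get_mem i, rfl⟩)

lemma spanOf_inSub_le (X : List (ZLat ι)) (r : Submodule ℝ (Amb ι)) : spanOf (inSub X r) ≤ r :=
  Submodule.span_le.mpr fun _ ⟨_, ha, hv⟩ => hv ▸ of_decide_eq_true (List.mem_filter.mp ha).2

theorem partFn_memF {X : List (ZLat ι)} (hX0 : ∀ a ∈ X, a ≠ 0) (hP : PointedList X) :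
    memF X (partFn X) := by
  intro r _ γ hγ
  have hperm := perm_outSub_append_inSub X r
  have hnab : nabOut X r (partFn X) = partFn (inSub X r) := by
    rw [nabOut, partFn_perm hperm]
    exact nabL_partFn_append (hP.mono fun a => hperm.mem_iff.mpr)
      fun a ha => hX0 a (hperm.mem_iff.mpr ha)
  rw [mem_support, hnab] at hγ
  exact spanOf_inSub_le X r (castV_mem_spanOf_of_partFn_ne_zero hγ)

end

/-- `DM(X) ⊆ 𝓕(X)`, and if `X` generates a pointed cone then the partition function `𝓟_X`
belongs to `𝓕(X)`. -/
theorem DM_subset_F_and_partFn_memF {ι : Type*} [Fintype ι] (X : List (ZLat ι))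
    (hX0 : ∀ a ∈ X, a ≠ 0) (hspan : spanOf X = ⊤) :
    (∀ f : ZLat ι → ℤ, memDM X f → memF X f) ∧
    (PointedList X → memF X (partFn X)) :=
  ⟨fun _ => memF_of_memDM hspan, partFn_memF hX0⟩
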